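/- arXiv:2505.09247 — 2 statements merged into one kernel-verified Lean document; each statement's English description precedes it below -/
import Mathlib

section
/- Let $C$ be a symmetric positive definite $n\times n$ real matrix, $Z$ a $p\times n$ real matrix with $Z C Z^{T}$ invertible, and $G$ an $n\times q$ real matrix. Suppose $A:=G^{T}C^{-1}G$ and $B:=G^{T}Z^{T}(Z C Z^{T})^{-1}Z G$ are both positive definite. Then $A^{-1}\preceq B^{-1}$ in the Loewner order, i.e. $B^{-1}-A^{-1}$ is positive semidefinite. (This is the matrix content of Theorem 2(c): the asymptotic covariance $\Sigma_Q=[\dot G_K^{T}C_K^{-1}\dot G_K]^{-1}$ of the QIF estimator is no larger than the asymptotic covariance $\Sigma_G=[\dot G_K^{T}Z^{T}(Z C_K Z^{T})^{-1}Z\dot G_K]^{-1}$ of the GEE estimator.) -/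
/-!
With `W = [Zᴴ | C⁻¹G]`, the Gram matrix `Wᴴ C W` is the positive semidefinite block matrix
`[[Z C Zᴴ, Z G], [(Z G)ᴴ, Gᴴ C⁻¹ G]]`, whose Schur complement with respect to `Z C Zᴴ` is `A - B`;
hence `B ≤ A`. Inversion is antitone in the Loewner order, as one reads off the block matrix
`[[A, 1], [1, B⁻¹]]` by taking its Schur complement with respect to either diagonal block.
-/

open Matrix
open scoped ComplexOrder

namespace Matrix

variable {𝕜 : Type*} [RCLike 𝕜] {m n p q : Type*} [Fintype m] [DecidableEq m]
  [Fintype n] [DecidableEq n] [Fintype p] [DecidableEq p] [Fintype q]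

theorem PosDef.posSemidef_inv_sub_inv {A B : Matrix m m 𝕜} (hB : B.PosDef)
    (hBA : (A - B).PosSemidef) : (B⁻¹ - A⁻¹).PosSemidef := by
  have hA : A.PosDef := by simpa using hB.add_posSemidef hBA
  have := hA.isUnit.invertible
  have := hB.isUnit.invertible
  have := hB.inv.isUnit.invertible
  have schur₁₁ := PosDef.fromBlocks₁₁ (1 : Matrix m m 𝕜) B⁻¹ hA
  have schur₂₂ := PosDef.fromBlocks₂₂ A (1 : Matrix m m 𝕜) hB.inv
  simp only [conjTranspose_one, Matrix.one_mul, Matrix.mul_one, inv_inv_of_invertible]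
    at schur₁₁ schur₂₂
  exact schur₁₁.mp (schur₂₂.mpr hBA)

theorem PosDef.posSemidef_inv_conj_sub_compression_inv_conj {C : Matrix n n 𝕜} (hC : C.PosDef)
    (Z : Matrix p n 𝕜) (hZ : IsUnit (Z * C * Zᴴ)) (G : Matrix n q 𝕜) :
    (Gᴴ * C⁻¹ * G - Gᴴ * Zᴴ * (Z * C * Zᴴ)⁻¹ * (Z * G)).PosSemidef := by
  have hZCZ : (Z * C * Zᴴ).PosDef := by
    have hpsd := hC.posSemidef.conjTranspose_mul_mul_same Zᴴ
    rw [conjTranspose_conjTranspose] at hpsd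
    exact hpsd.posDef_iff_isUnit.mpr hZ
  have := hZCZ.isUnit.invertible
  have := hC.isUnit.invertible
  have gram : (fromCols Zᴴ (C⁻¹ * G))ᴴ * C * fromCols Zᴴ (C⁻¹ * G) =
      fromBlocks (Z * C * Zᴴ) (Z * G) (Z * G)ᴴ (Gᴴ * C⁻¹ * G) := by
    rw [conjTranspose_fromCols_eq_fromRows_conjTranspose, fromRows_mul, fromRows_mul_fromCols]
    simp [conjTranspose_nonsing_inv, hC.1.eq, Matrix.mul_assoc]
  have hgram := hC.posSemidef.conjTranspose_mul_mul_same (fromCols Zᴴ (C⁻¹ * G))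
  rw [gram, PosDef.fromBlocks₁₁ _ _ hZCZ, conjTranspose_mul] at hgram
  simpa [Matrix.mul_assoc] using hgram

end Matrix

theorem qif_covariance_le_gee_general {n p q : ℕ}
    (C : Matrix (Fin n) (Fin n) ℝ) (hC : C.PosDef)
    (Z : Matrix (Fin p) (Fin n) ℝ) (hZ : IsUnit (Z * C * Zᵀ))
    (G : Matrix (Fin n) (Fin q) ℝ)
    (hB : (Gᵀ * Zᵀ * (Z * C * Zᵀ)⁻¹ * (Z * G)).PosDef) :
    ((Gᵀ * Zᵀ * (Z * C * Zᵀ)⁻¹ * (Z * G))⁻¹ - (Gᵀ * C⁻¹ * G)⁻¹).PosSemidef := by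
  have hBA := hC.posSemidef_inv_conj_sub_compression_inv_conj Z hZ G
  simp only [conjTranspose_eq_transpose_of_trivial] at hBA
  exact hB.posSemidef_inv_sub_inv hBA

/-- Theorem 2(c), matrix form: the asymptotic covariance `A⁻¹ = (Gᵀ C⁻¹ G)⁻¹` of the
QIF estimator is no larger (in the Loewner order) than the asymptotic covariance
`B⁻¹ = (Gᵀ Zᵀ (Z C Zᵀ)⁻¹ Z G)⁻¹` of the GEE estimator. -/
theorem qif_covariance_le_gee {n p q : ℕ}
    (C : Matrix (Fin n) (Fin n) ℝ) (hC : C.PosDef)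
    (Z : Matrix (Fin p) (Fin n) ℝ) (hZ : IsUnit (Z * C * Zᵀ))
    (G : Matrix (Fin n) (Fin q) ℝ)
    (hA : (Gᵀ * C⁻¹ * G).PosDef)
    (hB : (Gᵀ * Zᵀ * (Z * C * Zᵀ)⁻¹ * (Z * G)).PosDef) :
    ((Gᵀ * Zᵀ * (Z * C * Zᵀ)⁻¹ * (Z * G))⁻¹ - (Gᵀ * C⁻¹ * G)⁻¹).PosSemidef :=
  qif_covariance_le_gee_general C hC Z hZ G hB
end

section
/- Let $\Omega$ be a symmetric positive definite $n\times n$ real matrix, $W$ a symmetric $n\times n$ real matrix, and $G$ an $n\times p$ real matrix such that $G^{T}W\Omega W G$ is invertible. Then the matrix $S = G^{T}\Omega^{-1}G - \bigl(G^{T}WG\bigr)\bigl(G^{T}W\Omega W G\bigr)^{-1}\bigl(G^{T}WG\bigr)$ is positive semidefinite. Moreover, if $W=\Omega^{-1}$ then $S=0$. -/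
/-!
With `X = Ω⁻¹ G` and `Y = W G`, the matrix `S` is the Schur complement
`Xᴴ Ω X - Xᴴ Ω Y (Yᴴ Ω Y)⁻¹ Yᴴ Ω X` of the `Ω`-Gram matrix of `(X, Y)`. It equals `Cᴴ Ω C`
for the residual `C = X - Y (Yᴴ Ω Y)⁻¹ Yᴴ Ω X` of `X` after `Ω`-orthogonal projection onto the
columns of `Y`, so it is positive semidefinite. For `W = Ω⁻¹` both terms of `S` reduce to
`Gᵀ Ω⁻¹ G`.
-/

open Matrix

namespace Matrix

variable {m n p R : Type*} [CommRing R] [StarRing R] [Fintype m] [Fintype p] [DecidableEq p]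
  {Ω : Matrix m m R}

theorem IsHermitian.schur_complement_gram_eq (hΩ : Ω.IsHermitian) (X : Matrix m n R)
    (Y : Matrix m p R) (hM : IsUnit (Yᴴ * Ω * Y)) :
    (X - Y * ((Yᴴ * Ω * Y)⁻¹ * (Yᴴ * Ω * X)))ᴴ * Ω * (X - Y * ((Yᴴ * Ω * Y)⁻¹ * (Yᴴ * Ω * X))) =
      Xᴴ * Ω * X - Xᴴ * Ω * Y * (Yᴴ * Ω * Y)⁻¹ * (Yᴴ * Ω * X) := by
  set M := Yᴴ * Ω * Y
  set B := Yᴴ * Ω * X with hB_def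
  set K := M⁻¹ * B
  have hMK : M * K = B := mul_nonsing_inv_cancel_left M B ((isUnit_iff_isUnit_det M).mp hM)
  have hKh : Kᴴ = Xᴴ * Ω * Y * M⁻¹ := by
    rw [conjTranspose_mul, (isHermitian_conjTranspose_mul_mul Y hΩ).inv.eq, hB_def,
      conjTranspose_mul, conjTranspose_mul, conjTranspose_conjTranspose, hΩ.eq,
      ← Matrix.mul_assoc Xᴴ Ω]
  calc (X - Y * K)ᴴ * Ω * (X - Y * K)
      = Xᴴ * Ω * X - Xᴴ * Ω * Y * K - Kᴴ * B + Kᴴ * (M * K) := by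
        simp only [conjTranspose_sub, conjTranspose_mul, Matrix.sub_mul, Matrix.mul_sub, B, M,
          Matrix.mul_assoc]
        abel
    _ = Xᴴ * Ω * X - Xᴴ * Ω * Y * M⁻¹ * B := by
        rw [hMK, hKh, Matrix.mul_assoc _ M⁻¹]
        abel

theorem PosSemidef.schur_complement_gram [PartialOrder R] [Finite n] (hΩ : Ω.PosSemidef)
    (X : Matrix m n R) (Y : Matrix m p R) (hM : IsUnit (Yᴴ * Ω * Y)) :
    (Xᴴ * Ω * X - Xᴴ * Ω * Y * (Yᴴ * Ω * Y)⁻¹ * (Yᴴ * Ω * X)).PosSemidef := by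
  rw [← hΩ.isHermitian.schur_complement_gram_eq X Y hM]
  exact hΩ.conjTranspose_mul_mul_same _

end Matrix

/-- Matrix inequality at the heart of Theorem 2(d) (optimality of QIF):
`S = Gᵀ Ω⁻¹ G - (Gᵀ W G)(Gᵀ W Ω W G)⁻¹(Gᵀ W G)` is positive semidefinite, and `S = 0`
when `W = Ω⁻¹`. -/
theorem gmm_optimality_core {n p : ℕ}
    (Ω : Matrix (Fin n) (Fin n) ℝ) (hΩ : Ω.PosDef)
    (W : Matrix (Fin n) (Fin n) ℝ) (hW : Wᵀ = W)
    (G : Matrix (Fin n) (Fin p) ℝ) (hinv : IsUnit (Gᵀ * W * Ω * W * G)) :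
    (Gᵀ * Ω⁻¹ * G -
        (Gᵀ * W * G) * (Gᵀ * W * Ω * W * G)⁻¹ * (Gᵀ * W * G)).PosSemidef ∧
      (W = Ω⁻¹ →
        Gᵀ * Ω⁻¹ * G -
            (Gᵀ * W * G) * (Gᵀ * W * Ω * W * G)⁻¹ * (Gᵀ * W * G) = 0) := by
  have hΩdet : IsUnit Ω.det := hΩ.isUnit.map detMonoidHom
  have hΩinvT : Ω⁻¹ᵀ = Ω⁻¹ := by
    simpa only [conjTranspose_eq_transpose_of_trivial] using hΩ.isHermitian.inv.eq
  constructor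
  · have hM : IsUnit ((W * G)ᴴ * Ω * (W * G)) := by
      simpa only [conjTranspose_eq_transpose_of_trivial, transpose_mul, hW, Matrix.mul_assoc]
        using hinv
    have hschur := hΩ.posSemidef.schur_complement_gram (Ω⁻¹ * G) (W * G) hM
    simpa only [conjTranspose_eq_transpose_of_trivial, transpose_mul, hW, hΩinvT,
      Matrix.mul_assoc, mul_nonsing_inv_cancel_left _ _ hΩdet,
      nonsing_inv_mul_cancel_left _ _ hΩdet] using hschur
  · rintro rfl
    have hN : Gᵀ * Ω⁻¹ * Ω * Ω⁻¹ * G = Gᵀ * Ω⁻¹ * G := by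
      simp only [Matrix.mul_assoc, mul_nonsing_inv_cancel_left _ _ hΩdet]
    rw [hN] at hinv ⊢
    rw [mul_nonsing_inv _ ((isUnit_iff_isUnit_det _).mp hinv), Matrix.one_mul, sub_self]
end
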